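/- Every λ-term typable in system F is strongly normalizable: if Γ ⊢_F t : A then every β-reduction sequence starting from t is finite. -/

import Mathlib

set_option maxHeartbeats 1000000


/-- Untyped λ-terms in de Bruijn representation. -/
inductive Trm : Type
  | var : ℕ → Trm
  | app : Trm → Trm → Trm
  | lam : Trm → Trm
  deriving DecidableEq

namespace Trm

/-- The set of free variables of a term (as de Bruijn indices). -/
def fv : Trm → Set ℕ
  | var n => {n}
  | app u v => fv u ∪ fv v
  | lam u => {n | n + 1 ∈ fv u}

/-- A term is closed if it has no free variables. -/
def Closed (t : Trm) : Prop := fv t = ∅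

/-- λI-terms: abstraction is allowed only on variables occurring free in the body. -/
inductive IsLI : Trm → Prop
  | var (n : ℕ) : IsLI (var n)
  | app {u v : Trm} : IsLI u → IsLI v → IsLI (app u v)
  | lam {u : Trm} : IsLI u → 0 ∈ fv u → IsLI (lam u)

/-- Lifting of free variables ≥ d. -/
def lift (d : ℕ) : Trm → Trm
  | var n => if n < d then var n else var (n + 1)
  | app u v => app (lift d u) (lift d v)
  | lam u => lam (lift (d + 1) u)

def liftTimes (k : ℕ) (t : Trm) : Trm := (lift 0)^[k] t

/-- Capture-avoiding substitution of the k-th free variable. -/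
def subst : Trm → ℕ → Trm → Trm
  | var n, k, v => if n < k then var n else if n = k then liftTimes k v else var (n - 1)
  | app a b, k, v => app (subst a k v) (subst b k v)
  | lam a, k, v => lam (subst a (k + 1) v)

end Trm

/-- One step of β-reduction. -/
inductive Beta : Trm → Trm → Prop
  | beta {u v : Trm} : Beta (.app (.lam u) v) (u.subst 0 v)
  | appL {u u' v : Trm} : Beta u u' → Beta (.app u v) (.app u' v)
  | appR {u v v' : Trm} : Beta v v' → Beta (.app u v) (.app u v')
  | lam {u u' : Trm} : Beta u u' → Beta (.lam u) (.lam u')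

/-- One step of η-reduction: λx (u)x → u when x ∉ Fv(u). -/
inductive Eta : Trm → Trm → Prop
  | eta (u : Trm) : Eta (.lam (.app (u.lift 0) (.var 0))) u
  | appL {u u' v : Trm} : Eta u u' → Eta (.app u v) (.app u' v)
  | appR {u v v' : Trm} : Eta v v' → Eta (.app u v) (.app u v')
  | lam {u u' : Trm} : Eta u u' → Eta (.lam u) (.lam u')

/-- β-reduction (reflexive-transitive closure). -/
def BetaStar : Trm → Trm → Prop := Relation.ReflTransGen Beta

/-- βη-reduction (reflexive-transitive closure of the union of β and η). -/
def BetaEtaStar : Trm → Trm → Prop := Relation.ReflTransGen (fun a b => Beta a b ∨ Eta a b)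

/-- η-reduction (reflexive-transitive closure). -/
def EtaStar : Trm → Trm → Prop := Relation.ReflTransGen Eta

/-- A term is β-normal iff it contains no β-redex. -/
def BetaNormal (t : Trm) : Prop := ∀ u, ¬ Beta t u

/-- A term is βη-normal iff it contains neither a β-redex nor an η-redex. -/
def BetaEtaNormal (t : Trm) : Prop := ∀ u, ¬ Beta t u ∧ ¬ Eta t u

/-- A term is strongly normalizable iff every β-reduction sequence from it is finite. -/
def StronglyNormalizable (t : Trm) : Prop :=
  ¬ ∃ f : ℕ → Trm, f 0 = t ∧ ∀ n, Beta (f n) (f (n + 1))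

/-- Types of system F in de Bruijn representation. -/
inductive Ty : Type
  | var : ℕ → Ty
  | arr : Ty → Ty → Ty
  | all : Ty → Ty
  deriving DecidableEq

namespace Ty

/-- Free type variables. -/
def tfv : Ty → Set ℕ
  | var n => {n}
  | arr A B => tfv A ∪ tfv B
  | all A => {n | n + 1 ∈ tfv A}

/-- Lifting of free type variables ≥ d. -/
def tlift (d : ℕ) : Ty → Ty
  | var n => if n < d then var n else var (n + 1)
  | arr A B => arr (tlift d A) (tlift d B)
  | all A => all (tlift (d + 1) A)

def tliftTimes (k : ℕ) (A : Ty) : Ty := (tlift 0)^[k] A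

/-- Substitution of the k-th free type variable. -/
def tsubst : Ty → ℕ → Ty → Ty
  | var n, k, G => if n < k then var n else if n = k then tliftTimes k G else var (n - 1)
  | arr A B, k, G => arr (tsubst A k G) (tsubst B k G)
  | all A, k, G => all (tsubst A (k + 1) G)

/-- Proper types: in every subtype ∀X E, the variable X occurs free in E. -/
def Proper : Ty → Prop
  | var _ => True
  | arr A B => Proper A ∧ Proper B
  | all A => Proper A ∧ 0 ∈ tfv A

/-- Closed types. -/
def ClosedTy (A : Ty) : Prop := tfv A = ∅

end Ty

/-- Typing judgments of system F (restricted to proper types: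
the rule (∀e) requires X free in A and instantiates at proper types only). -/
inductive Typing : List Ty → Trm → Ty → Prop
  | ax {Γ : List Ty} {n : ℕ} {A : Ty} :
      Γ[n]? = some A → (∀ B ∈ Γ, B.Proper) → Typing Γ (.var n) A
  | arrI {Γ : List Ty} {A B : Ty} {t : Trm} :
      A.Proper → Typing (A :: Γ) t B → Typing Γ (.lam t) (.arr A B)
  | arrE {Γ : List Ty} {A B : Ty} {u v : Trm} :
      Typing Γ u (.arr A B) → Typing Γ v A → Typing Γ (.app u v) B
  | allI {Γ : List Ty} {A : Ty} {t : Trm} :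
      0 ∈ Ty.tfv A → Typing (Γ.map (Ty.tlift 0)) t A → Typing Γ t (.all A)
  | allE {Γ : List Ty} {A : Ty} {t : Trm} (G : Ty) :
      G.Proper → 0 ∈ Ty.tfv A → Typing Γ t (.all A) → Typing Γ t (A.tsubst 0 G)

/-!
Tait–Girard reducibility candidates. A candidate is a set of strongly normalizable terms that
is closed under β-reduction and contains every neutral term all of whose one-step reducts it
contains; variables belong to every candidate. Candidates are closed under the function-space
construction `X → Y` and under arbitrary nonempty intersections, so every type is interpreted
by a candidate once its free type variables are, with `∀` read as the intersection over all
candidates. This is where impredicativity is absorbed: the quantification is over sets of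
terms, not over types, and instantiating `∀X A` at `G` amounts to choosing the candidate
interpreting `G`. By induction on the derivation, a typed term with candidate members
substituted for its free variables lies in the interpretation of its type; substituting the
variables themselves shows that it is strongly normalizable.
-/

def scons {α : Type*} (a : α) (f : ℕ → α) : ℕ → α
  | 0 => a
  | n + 1 => f n

def liftIdx (d n : ℕ) : ℕ := if n < d then n else n + 1

def insertIdx {α : Type*} (k : ℕ) (x : α) (f : ℕ → α) (n : ℕ) : α :=
  if n < k then f n else if n = k then x else f (n - 1)

section IndexMaps

variable {α β : Type*}

theorem liftIdx_zero : liftIdx 0 = Nat.succ := by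
  funext n
  simp [liftIdx]

theorem scons_comp_liftIdx_succ (a : α) (f : ℕ → α) (d : ℕ) :
    scons a f ∘ liftIdx (d + 1) = scons a (f ∘ liftIdx d) := by
  funext n
  cases n with
  | zero => rfl
  | succ n =>
    show scons a f (liftIdx (d + 1) (n + 1)) = f (liftIdx d n)
    unfold liftIdx
    split_ifs <;> first | rfl | omega

theorem scons_zero_succ (f : ℕ → α) : scons (f 0) (f ∘ Nat.succ) = f := by
  funext n
  cases n <;> rfl

theorem insertIdx_zero (x : α) (f : ℕ → α) : insertIdx 0 x f = scons x f := by
  funext n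
  cases n <;> rfl

theorem scons_insertIdx (a x : α) (f : ℕ → α) (k : ℕ) :
    scons a (insertIdx k x f) = insertIdx (k + 1) x (scons a f) := by
  funext n
  cases n with
  | zero => simp [insertIdx, scons]
  | succ n =>
    show insertIdx k x f n = insertIdx (k + 1) x (scons a f) (n + 1)
    unfold insertIdx
    split_ifs <;> first | rfl | omega | skip
    obtain ⟨m, rfl⟩ : ∃ m, n = m + 1 := ⟨n - 1, by omega⟩
    rfl

theorem comp_insertIdx (g : α → β) (x : α) (f : ℕ → α) (k : ℕ) :
    g ∘ insertIdx k x f = insertIdx k (g x) (g ∘ f) := by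
  funext n
  simp only [Function.comp, insertIdx]
  split_ifs <;> rfl

end IndexMaps

namespace Trm

def upRen (ξ : ℕ → ℕ) : ℕ → ℕ := scons 0 (Nat.succ ∘ ξ)

def rename (ξ : ℕ → ℕ) : Trm → Trm
  | var n => var (ξ n)
  | app u v => app (rename ξ u) (rename ξ v)
  | lam u => lam (rename (upRen ξ) u)

def upSubst (σ : ℕ → Trm) : ℕ → Trm := scons (var 0) (rename Nat.succ ∘ σ)

def parSubst (σ : ℕ → Trm) : Trm → Trm
  | var n => σ n
  | app u v => app (parSubst σ u) (parSubst σ v)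
  | lam u => lam (parSubst (upSubst σ) u)

theorem rename_rename (ξ ζ : ℕ → ℕ) (t : Trm) :
    rename ξ (rename ζ t) = rename (ξ ∘ ζ) t := by
  induction t generalizing ξ ζ with
  | var n => rfl
  | app u v ihu ihv => simp only [rename, ihu, ihv]
  | lam u ih =>
    have hup : upRen ξ ∘ upRen ζ = upRen (ξ ∘ ζ) := by funext n; cases n <;> rfl
    simp only [rename, ih, hup]

theorem parSubst_rename (σ : ℕ → Trm) (ξ : ℕ → ℕ) (t : Trm) :
    parSubst σ (rename ξ t) = parSubst (σ ∘ ξ) t := by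
  induction t generalizing σ ξ with
  | var n => rfl
  | app u v ihu ihv => simp only [rename, parSubst, ihu, ihv]
  | lam u ih =>
    have hup : upSubst σ ∘ upRen ξ = upSubst (σ ∘ ξ) := by funext n; cases n <;> rfl
    simp only [rename, parSubst, ih, hup]

theorem rename_parSubst (ξ : ℕ → ℕ) (σ : ℕ → Trm) (t : Trm) :
    rename ξ (parSubst σ t) = parSubst (rename ξ ∘ σ) t := by
  induction t generalizing σ ξ with
  | var n => rfl
  | app u v ihu ihv => simp only [rename, parSubst, ihu, ihv]
  | lam u ih =>
    have hup : rename (upRen ξ) ∘ upSubst σ = upSubst (rename ξ ∘ σ) := by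
      funext n
      cases n with
      | zero => rfl
      | succ n =>
        show rename (upRen ξ) (rename Nat.succ (σ n)) = rename Nat.succ (rename ξ (σ n))
        rw [rename_rename, rename_rename]
        rfl
    simp only [rename, parSubst, ih, hup]

theorem parSubst_parSubst (σ τ : ℕ → Trm) (t : Trm) :
    parSubst σ (parSubst τ t) = parSubst (parSubst σ ∘ τ) t := by
  induction t generalizing σ τ with
  | var n => rfl
  | app u v ihu ihv => simp only [parSubst, ihu, ihv]
  | lam u ih =>
    have hup : parSubst (upSubst σ) ∘ upSubst τ = upSubst (parSubst σ ∘ τ) := by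
      funext n
      cases n with
      | zero => rfl
      | succ n => exact (parSubst_rename _ _ _).trans (rename_parSubst _ _ _).symm
    simp only [parSubst, ih, hup]

theorem parSubst_var (t : Trm) : parSubst var t = t := by
  induction t with
  | var n => rfl
  | app u v ihu ihv => simp only [parSubst, ihu, ihv]
  | lam u ih =>
    have hup : upSubst var = var := by funext n; cases n <;> rfl
    simp only [parSubst, hup, ih]

theorem lift_eq_rename (d : ℕ) (t : Trm) : t.lift d = rename (liftIdx d) t := by
  induction t generalizing d with
  | var n => simp only [lift, rename, liftIdx]; split <;> rfl
  | app u v ihu ihv => simp only [lift, rename, ihu, ihv]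
  | lam u ih =>
    have hup : upRen (liftIdx d) = liftIdx (d + 1) := by
      funext n
      cases n with
      | zero => rfl
      | succ n =>
        simp only [upRen, scons, Function.comp, liftIdx]
        split_ifs <;> omega
    simp only [lift, rename, ih, hup]

theorem liftTimes_succ (k : ℕ) (t : Trm) :
    liftTimes (k + 1) t = rename Nat.succ (liftTimes k t) := by
  rw [liftTimes, Function.iterate_succ_apply', lift_eq_rename, liftIdx_zero]
  rfl

theorem upSubst_insertIdx (k : ℕ) (x : Trm) :
    upSubst (insertIdx k x var) = insertIdx (k + 1) (rename Nat.succ x) var := by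
  rw [upSubst, comp_insertIdx, scons_insertIdx]
  exact congrArg _ (scons_zero_succ var)

theorem subst_eq_parSubst (t : Trm) (k : ℕ) (v : Trm) :
    t.subst k v = parSubst (insertIdx k (liftTimes k v) var) t := by
  induction t generalizing k with
  | var n => rfl
  | app a b iha ihb => simp only [subst, parSubst, iha, ihb]
  | lam a ih => simp only [subst, parSubst, ih, upSubst_insertIdx, liftTimes_succ]

theorem subst_zero_eq_parSubst (t v : Trm) : t.subst 0 v = parSubst (scons v var) t := by
  rw [subst_eq_parSubst, insertIdx_zero]
  rfl

theorem subst_zero_parSubst_upSubst (σ : ℕ → Trm) (t v : Trm) :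
    (parSubst (upSubst σ) t).subst 0 v = parSubst (scons v σ) t := by
  rw [subst_zero_eq_parSubst, parSubst_parSubst]
  congr 1
  funext n
  cases n with
  | zero => rfl
  | succ n => exact (parSubst_rename _ _ _).trans (parSubst_var _)

end Trm

open Trm

theorem Beta.parSubst {t t' : Trm} (h : Beta t t') (σ : ℕ → Trm) :
    Beta (parSubst σ t) (parSubst σ t') := by
  induction h generalizing σ with
  | @beta u v =>
    have hσ : Trm.parSubst σ ∘ scons v var = scons (Trm.parSubst σ v) σ := by
      funext n; cases n <;> rfl
    rw [subst_zero_eq_parSubst, parSubst_parSubst, hσ, ← subst_zero_parSubst_upSubst]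
    exact Beta.beta
  | appL _ ih => exact Beta.appL (ih σ)
  | appR _ ih => exact Beta.appR (ih σ)
  | lam _ ih => exact Beta.lam (ih (upSubst σ))

theorem Beta.subst_zero {a a' : Trm} (h : Beta a a') (v : Trm) :
    Beta (a.subst 0 v) (a'.subst 0 v) := by
  simpa only [subst_zero_eq_parSubst] using h.parSubst _


namespace Trm

def SN (t : Trm) : Prop := Acc (fun a b => Beta b a) t

def IsNeutral : Trm → Prop
  | lam _ => False
  | _ => True

theorem SN.of_map {g : Trm → Trm} (hg : ∀ a b, Beta a b → Beta (g a) (g b)) {a : Trm}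
    (h : SN (g a)) : SN a :=
  Subrelation.accessible (fun hab => hg _ _ hab) (InvImage.accessible g h)

theorem SN.of_app_left {t u : Trm} (h : SN (app t u)) : SN t :=
  h.of_map fun _ _ => Beta.appL

theorem SN.of_subst_zero {a v : Trm} (h : SN (a.subst 0 v)) : SN a :=
  h.of_map fun _ _ hab => hab.subst_zero v

theorem SN.stronglyNormalizable {t : Trm} (h : SN t) : StronglyNormalizable t := by
  induction h with
  | intro t _ ih =>
    rintro ⟨f, rfl, hf⟩
    exact ih (f 1) (hf 0) ⟨fun n => f (n + 1), rfl, fun n => hf (n + 1)⟩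

end Trm

structure IsCandidate (X : Set Trm) : Prop where
  sn : ∀ t ∈ X, t.SN
  beta_mem : ∀ {t t'}, t ∈ X → Beta t t' → t' ∈ X
  neutral_mem : ∀ {t}, t.IsNeutral → (∀ t', Beta t t' → t' ∈ X) → t ∈ X

def arrowSet (X Y : Set Trm) : Set Trm := {t | ∀ u ∈ X, app t u ∈ Y}

namespace IsCandidate

variable {X Y : Set Trm}

theorem var_mem (hX : IsCandidate X) (n : ℕ) : var n ∈ X :=
  hX.neutral_mem trivial fun _ h => nomatch h

theorem setOf_SN : IsCandidate {t | t.SN} where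
  sn _ h := h
  beta_mem h hb := h.inv hb
  neutral_mem _ h := ⟨_, h⟩

theorem iInter {ι : Type*} [Nonempty ι] {F : ι → Set Trm} (hF : ∀ i, IsCandidate (F i)) :
    IsCandidate (⋂ i, F i) where
  sn t ht := (hF (Classical.arbitrary ι)).sn t (Set.mem_iInter.1 ht _)
  beta_mem ht hb := Set.mem_iInter.2 fun i => (hF i).beta_mem (Set.mem_iInter.1 ht i) hb
  neutral_mem hn h := Set.mem_iInter.2 fun i =>
    (hF i).neutral_mem hn fun t' hb => Set.mem_iInter.1 (h t' hb) i

theorem arrow (hX : IsCandidate X) (hY : IsCandidate Y) : IsCandidate (arrowSet X Y) where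
  sn t ht := SN.of_app_left (hY.sn _ (ht _ (hX.var_mem 0)))
  beta_mem ht hb u hu := hY.beta_mem (ht u hu) (Beta.appL hb)
  neutral_mem {t} hn ht u hu := by
    -- a neutral `t` creates no redex with `u`, so induct on the reductions of `u`
    induction hX.sn u hu with
    | intro u _ ihu =>
      refine hY.neutral_mem trivial fun t' hb => ?_
      cases hb with
      | beta => exact hn.elim
      | appL hl => exact ht _ hl u hu
      | appR hr => exact ihu _ hr (hX.beta_mem hu hr)

theorem app_lam_mem (hX : IsCandidate X) (hY : IsCandidate Y) {a : Trm} (ha : a.SN)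
    (h : ∀ v ∈ X, a.subst 0 v ∈ Y) {u : Trm} (hu : u ∈ X) : app (lam a) u ∈ Y := by
  induction ha generalizing u with
  | intro a _ iha =>
    induction hX.sn u hu with
    | intro u _ ihu =>
      refine hY.neutral_mem trivial fun t' hb => ?_
      cases hb with
      | beta => exact h _ hu
      | appL hl =>
        cases hl with
        | lam ha' => exact iha _ ha' (fun v hv => hY.beta_mem (h v hv) (ha'.subst_zero v)) hu
      | appR hr => exact ihu _ hr (hX.beta_mem hu hr)

theorem lam_mem_arrowSet (hX : IsCandidate X) (hY : IsCandidate Y) {a : Trm}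
    (h : ∀ v ∈ X, a.subst 0 v ∈ Y) : lam a ∈ arrowSet X Y :=
  fun _ => hX.app_lam_mem hY (SN.of_subst_zero (hY.sn _ (h _ (hX.var_mem 0)))) h

end IsCandidate

namespace Ty

def interp : Ty → (ℕ → Set Trm) → Set Trm
  | var n, ρ => ρ n
  | arr A B, ρ => arrowSet (interp A ρ) (interp B ρ)
  | all A, ρ => ⋂ X : {X // IsCandidate X}, interp A (scons X.1 ρ)

theorem isCandidate_interp (A : Ty) {ρ : ℕ → Set Trm} (hρ : ∀ n, IsCandidate (ρ n)) :
    IsCandidate (A.interp ρ) := by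
  induction A generalizing ρ with
  | var n => exact hρ n
  | arr A B ihA ihB => exact (ihA hρ).arrow (ihB hρ)
  | all A ih =>
    have : Nonempty {X // IsCandidate X} := ⟨⟨_, IsCandidate.setOf_SN⟩⟩
    exact IsCandidate.iInter fun X => ih fun n => by cases n <;> [exact X.2; exact hρ _]

theorem interp_tlift (A : Ty) (d : ℕ) (ρ : ℕ → Set Trm) :
    (A.tlift d).interp ρ = A.interp (ρ ∘ liftIdx d) := by
  induction A generalizing d ρ with
  | var n =>
    show (if n < d then var n else var (n + 1)).interp ρ = ρ (liftIdx d n)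
    unfold liftIdx
    split <;> rfl
  | arr A B ihA ihB => simp only [tlift, interp, ihA, ihB]
  | all A ih => simp only [tlift, interp, ih, scons_comp_liftIdx_succ]

theorem interp_tsubst (A : Ty) (k : ℕ) (G : Ty) (ρ : ℕ → Set Trm) :
    (A.tsubst k G).interp ρ = A.interp (insertIdx k ((G.tliftTimes k).interp ρ) ρ) := by
  induction A generalizing k ρ with
  | var n =>
    show (if n < k then var n else if n = k then G.tliftTimes k else var (n - 1)).interp ρ =
      insertIdx k ((G.tliftTimes k).interp ρ) ρ n
    unfold insertIdx
    split_ifs <;> rfl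
  | arr A B ihA ihB => simp only [tsubst, interp, ihA, ihB]
  | all A ih =>
    have hlift (X : Set Trm) :
        (G.tliftTimes (k + 1)).interp (scons X ρ) = (G.tliftTimes k).interp ρ := by
      rw [tliftTimes, Function.iterate_succ_apply', interp_tlift, liftIdx_zero]
      rfl
    simp only [tsubst, interp, ih, hlift, scons_insertIdx]

theorem interp_tsubst_zero (A G : Ty) (ρ : ℕ → Set Trm) :
    (A.tsubst 0 G).interp ρ = A.interp (scons (G.interp ρ) ρ) := by
  rw [interp_tsubst, insertIdx_zero]
  rfl

end Ty

theorem Typing.parSubst_mem_interp {Γ : List Ty} {t : Trm} {A : Ty} (h : Typing Γ t A)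
    {ρ : ℕ → Set Trm} (hρ : ∀ n, IsCandidate (ρ n))
    {σ : ℕ → Trm} (hσ : ∀ n B, Γ[n]? = some B → σ n ∈ B.interp ρ) :
    parSubst σ t ∈ A.interp ρ := by
  induction h generalizing ρ σ with
  | ax hn _ => exact hσ _ _ hn
  | @arrI Γ A B t _ _ ih =>
    refine (A.isCandidate_interp hρ).lam_mem_arrowSet (B.isCandidate_interp hρ) fun v hv => ?_
    rw [subst_zero_parSubst_upSubst]
    refine ih hρ fun n C hC => ?_
    cases n with
    | zero => exact Option.some_injective _ hC ▸ hv
    | succ n => exact hσ n C hC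
  | arrE _ _ ihu ihv => exact ihu hρ hσ _ (ihv hρ hσ)
  | @allI Γ A t _ _ ih =>
    refine Set.mem_iInter.2 fun X => ih (fun n => by cases n <;> [exact X.2; exact hρ _]) ?_
    intro n B hB
    obtain ⟨C, hC, rfl⟩ := Option.map_eq_some_iff.1 (List.getElem?_map ▸ hB)
    rw [Ty.interp_tlift, liftIdx_zero]
    exact hσ n C hC
  | allE G _ _ _ ih =>
    rw [Ty.interp_tsubst_zero]
    exact Set.mem_iInter.1 (ih hρ hσ) ⟨_, G.isCandidate_interp hρ⟩

theorem Typing.sn {Γ : List Ty} {t : Trm} {A : Ty} (h : Typing Γ t A) : t.SN := by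
  have hρ : ∀ n : ℕ, IsCandidate {t : Trm | t.SN} := fun _ => IsCandidate.setOf_SN
  have hσ (n : ℕ) (B : Ty) (_ : Γ[n]? = some B) : var n ∈ B.interp _ :=
    (B.isCandidate_interp hρ).var_mem n
  simpa only [parSubst_var] using (A.isCandidate_interp hρ).sn _ (h.parSubst_mem_interp hρ hσ)

/-- every λ-term typable in system F is strongly normalizable. -/
theorem stmt4 (Γ : List Ty) (t : Trm) (A : Ty) (h : Typing Γ t A) :
    StronglyNormalizable t :=
  h.sn.stronglyNormalizable
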